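/- arXiv:1408.6367 — 3 statements merged into one kernel-verified Lean document; each statement's English description precedes it below -/
import Mathlib

section
/- Let L and M be complete lattices and let G : M × L → L be completely join-preserving (with respect to the product order). Define h : M → L by h(a) = ⋀ { x ∈ L | G(a, x) ≤ x }. Then h is completely join-preserving, i.e., for every S ⊆ M, h(⋁S) = ⋁ { h(s) | s ∈ S }. -/
theorem stmt2 {L M : Type*} [CompleteLattice L] [CompleteLattice M]
    (G : M × L → L)
    (hG : ∀ S : Set (M × L), G (sSup S) = ⨆ s ∈ S, G s)
    (h : M → L) (hdef : ∀ a : M, h a = sInf {x : L | G (a, x) ≤ x}) :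
    ∀ S : Set M, h (sSup S) = ⨆ s ∈ S, h s := by
  -- G is monotone
  have hmono : Monotone G := by
    intro p q hpq
    have hs : sSup {p, q} = q := by
      rw [sSup_insert, sSup_singleton, sup_eq_right.mpr hpq]
    have := hG {p, q}
    rw [hs] at this
    rw [this]
    exact le_biSup G (by simp)
  -- G ⊥ = ⊥
  have hbot : G ⊥ = ⊥ := by
    have := hG ∅
    simpa using this
  -- h a is a pre-fixed point
  have hpre : ∀ a : M, G (a, h a) ≤ h a := by
    intro a
    conv_rhs => rw [hdef a]
    apply le_sInf
    intro x hx
    calc G (a, h a) ≤ G (a, x) := by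
          apply hmono
          exact ⟨le_rfl, by rw [hdef a]; exact sInf_le hx⟩
      _ ≤ x := hx
  -- h is monotone
  have hhmono : Monotone h := by
    intro a b hab
    rw [hdef a, hdef b]
    apply sInf_le_sInf
    intro x hx
    exact le_trans (hmono (Prod.mk_le_mk.mpr ⟨hab, le_rfl⟩)) hx
  intro S
  apply le_antisymm
  · -- key: t := ⨆ s ∈ S, h s is a pre-fixed point for sSup S
    set t : L := ⨆ s ∈ S, h s with ht
    set T : Set (M × L) := insert (⊥, ⊥) ((fun s => (s, h s)) '' S) with hT
    have hsupT : sSup T = (sSup S, t) := by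
      apply le_antisymm
      · apply sSup_le
        rintro p hp
        rcases hp with rfl | ⟨s, hs, rfl⟩
        · exact ⟨bot_le, bot_le⟩
        · exact ⟨le_sSup hs, le_biSup h hs⟩
      · constructor
        · simp only [Prod.fst_sSup]
          apply sSup_le
          intro a ha
          refine le_sSup ?_
          exact ⟨(a, h a), Set.mem_insert_of_mem _ ⟨a, ha, rfl⟩, rfl⟩
        · simp only [Prod.snd_sSup]
          apply iSup₂_le
          intro s hs
          refine le_sSup ?_
          exact ⟨(s, h s), Set.mem_insert_of_mem _ ⟨s, hs, rfl⟩, rfl⟩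
    have hkey : G (sSup S, t) ≤ t := by
      rw [← hsupT, hG T]
      apply iSup₂_le
      rintro p hp
      rcases hp with rfl | ⟨s, hs, rfl⟩
      · rw [show ((⊥, ⊥) : M × L) = ⊥ from rfl, hbot]; exact bot_le
      · exact le_trans (hpre s) (le_biSup h hs)
    rw [hdef (sSup S)]
    exact sInf_le hkey
  · exact iSup₂_le fun s hs => hhmono (le_sSup hs)
end

section
/- Let L be a complete lattice and let f : L^m × L → L be completely join-preserving. For each x ∈ L^m let μ_f(x) = ⋀ { a ∈ L | f(x, a) ≤ a } be the least fixed point of a ↦ f(x, a). Then for every subset S ⊆ L^m and every ordinal α, the α-th transfinite iterate satisfies f^α(⋁S, ⊥) = ⋁ { f^α(s, ⊥) | s ∈ S }, where f^0(x,⊥) = ⊥, f^(α+1)(x,⊥) = f(x, f^α(x,⊥)), and f^λ(x,⊥) = ⋁_{β<λ} f^β(x,⊥) at limit ordinals λ. -/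
/-!
Joins of parameters commute with every stage of the iteration, by transfinite induction on the
stage. At a successor stage this is exactly join-preservation of `f` in both arguments jointly,
applied to the family of pairs `(x i, f^α(x i, ⊥))`; at a limit stage it is the interchange of two
joins.
-/

noncomputable def iterF {L : Type*} [CompleteLattice L] {m : ℕ}
    (f : (Fin m → L) × L → L) (x : Fin m → L) (o : Ordinal) : L :=
  Ordinal.limitRecOn o ⊥ (fun _ ih => f (x, ih)) (fun o _ ih => ⨆ o' : Set.Iio o, ih o'.1 o'.2)

lemma map_iSup_of_map_sSup {α β ι : Type*} [CompleteLattice α] [CompleteLattice β] {f : α → β}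
    (hf : ∀ S : Set α, f (sSup S) = ⨆ s ∈ S, f s) (p : ι → α) :
    f (⨆ i, p i) = ⨆ i, f (p i) := by
  rw [← sSup_range, hf, iSup_range]

section Iteration

variable {L : Type*} [CompleteLattice L] {m : ℕ} (f : (Fin m → L) × L → L)

lemma iterF_zero (x : Fin m → L) : iterF f x 0 = ⊥ :=
  Ordinal.limitRecOn_zero _ _ _

lemma iterF_add_one (x : Fin m → L) (o : Ordinal) :
    iterF f x (o + 1) = f (x, iterF f x o) :=
  Ordinal.limitRecOn_add_one _ _ _ _

lemma iterF_limit (x : Fin m → L) {o : Ordinal} (ho : Order.IsSuccLimit o) :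
    iterF f x o = ⨆ o' : Set.Iio o, iterF f x o'.1 :=
  Ordinal.limitRecOn_limit _ _ _ _ ho

lemma iterF_iSup (hf : ∀ S : Set ((Fin m → L) × L), f (sSup S) = ⨆ s ∈ S, f s)
    {ι : Type*} (x : ι → Fin m → L) (α : Ordinal) :
    iterF f (⨆ i, x i) α = ⨆ i, iterF f (x i) α := by
  induction α using Ordinal.limitRecOn with
  | zero => simp only [iterF_zero, iSup_bot]
  | add_one o ih =>
    simp only [iterF_add_one, ih]
    rw [← Prod.iSup_mk, map_iSup_of_map_sSup hf]
  | limit o ho ih =>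
    simp only [iterF_limit f _ ho]
    calc ⨆ o' : Set.Iio o, iterF f (⨆ i, x i) o'.1
        = ⨆ o' : Set.Iio o, ⨆ i, iterF f (x i) o'.1 := iSup_congr fun o' => ih o'.1 o'.2
      _ = ⨆ i, ⨆ o' : Set.Iio o, iterF f (x i) o'.1 := iSup_comm

end Iteration

theorem stmt3 {L : Type*} [CompleteLattice L] (m : ℕ)
    (f : (Fin m → L) × L → L)
    (hf : ∀ S : Set ((Fin m → L) × L), f (sSup S) = ⨆ s ∈ S, f s) :
    ∀ (S : Set (Fin m → L)) (α : Ordinal),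
      iterF f (sSup S) α = ⨆ s ∈ S, iterF f s α := by
  intro S α
  rw [sSup_eq_iSup', iterF_iSup f hf, iSup_subtype']
end

section
/- Let C be a complete lattice whose completely join-irreducible elements are join-dense and completely join-prime. Let F : C × C → C be completely join-preserving (for the product order) and monotone in each argument, and for x ∈ C let μ(x) = ⋀ { a ∈ C | F(x, a) ≤ a }. Let j be completely join-prime and φ ∈ C. If j ≤ μ(φ), then there exists a completely join-irreducible j₀ with j₀ ≤ φ and j ≤ μ(j₀). -/
def CJIrr {C : Type*} [CompleteLattice C] (j : C) : Prop :=
  ∀ X : Set C, j = sSup X → ∃ x ∈ X, j = x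

def CJPrime {C : Type*} [CompleteLattice C] (j : C) : Prop :=
  ∀ X : Set C, j ≤ sSup X → ∃ x ∈ X, j ≤ x

theorem stmt18 {C : Type*} [CompleteLattice C]
    (hdense : ∀ c : C, c = sSup {x : C | CJIrr x ∧ x ≤ c})
    (hprime : ∀ x : C, CJIrr x → CJPrime x)
    (F : C × C → C)
    (hF : ∀ S : Set (C × C), F (sSup S) = ⨆ s ∈ S, F s)
    (hmono₁ : ∀ a : C, Monotone (fun x : C => F (x, a)))
    (hmono₂ : ∀ x : C, Monotone (fun a : C => F (x, a)))
    (j φ : C) (hj : CJPrime j)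
    (h : j ≤ sInf {a : C | F (φ, a) ≤ a}) :
    ∃ j₀ : C, CJIrr j₀ ∧ j₀ ≤ φ ∧ j ≤ sInf {a : C | F (j₀, a) ≤ a} := by
  set μ : C → C := fun x => sInf {a : C | F (x, a) ≤ a} with hμ
  set S : Set C := {x : C | CJIrr x ∧ x ≤ φ} with hS
  set A : C := sSup (μ '' S) with hA
  -- each μ x is a pre-fixed point
  have hpre : ∀ x : C, F (x, μ x) ≤ μ x := by
    intro x
    apply le_sInf
    intro a ha
    exact le_trans (hmono₂ x (sInf_le ha)) ha
  -- key: F (φ, A) ≤ A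
  set T : Set (C × C) := (fun x => (x, μ x)) '' S with hT
  have hsupT : sSup T = (φ, A) := by
    have h1 : (sSup T).1 = φ := by
      rw [Prod.fst_sSup]
      have : Prod.fst '' T = S := by
        ext y
        simp [hT, Set.image_image]
      rw [this]
      exact (hdense φ).symm
    have h2 : (sSup T).2 = A := by
      rw [Prod.snd_sSup]
      have : Prod.snd '' T = μ '' S := by
        ext y
        simp [hT, Set.image_image]
      rw [this, hA]
    rw [← h1, ← h2]
  have hFA : F (φ, A) ≤ A := by
    rw [← hsupT, hF]
    apply iSup_le
    intro s
    apply iSup_le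
    intro hs
    obtain ⟨x, hx, rfl⟩ := hs
    exact le_trans (hpre x) (le_sSup ⟨x, hx, rfl⟩)
  have hjA : j ≤ A := le_trans h (sInf_le hFA)
  obtain ⟨y, hy, hjy⟩ := hj (μ '' S) hjA
  obtain ⟨j₀, hj₀, rfl⟩ := hy
  exact ⟨j₀, hj₀.1, hj₀.2, hjy⟩
end
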